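/- arXiv:2008.04206 — 4 statements merged into one kernel-verified Lean document; each statement's English description precedes it below -/
import Mathlib

section
/- Let X be a nonempty convex closed set in ℝ^N and μ : ℝ^N → ℝ a continuous convex function. If the solution set X*(μ) = argmin_{x∈X} μ(x) is nonempty and bounded, then for any x* ∈ X*(μ) there exist a bounded set U ⊇ X*(μ) and a number σ > 0 such that μ(x) − μ* ≥ σ‖x − x*‖ for all x ∈ X \ U, where μ* = inf_{x∈X} μ(x). -/
open Set

/-- Sharp linear growth of a convex function outside a bounded neighbourhood of its
bounded solution set (Proposition 2.1). -/
theorem sharp_minimum_of_bounded_argmin {N : ℕ}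
    (X : Set (EuclideanSpace ℝ (Fin N))) (μ : EuclideanSpace ℝ (Fin N) → ℝ)
    (hXne : X.Nonempty) (hXconv : Convex ℝ X) (hXcl : IsClosed X)
    (hμcont : Continuous μ) (hμconv : ConvexOn ℝ Set.univ μ)
    (hne : {x ∈ X | ∀ y ∈ X, μ x ≤ μ y}.Nonempty)
    (hbd : Bornology.IsBounded {x ∈ X | ∀ y ∈ X, μ x ≤ μ y}) :
    ∀ xs ∈ {x ∈ X | ∀ y ∈ X, μ x ≤ μ y},
      ∃ (U : Set (EuclideanSpace ℝ (Fin N))) (σ : ℝ),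
        Bornology.IsBounded U ∧ {x ∈ X | ∀ y ∈ X, μ x ≤ μ y} ⊆ U ∧ 0 < σ ∧
        ∀ x ∈ X \ U, μ x - μ xs ≥ σ * ‖x - xs‖ := by
  rintro xs ⟨hxsX, hxsmin⟩
  obtain ⟨R', hR'⟩ := hbd.subset_closedBall xs
  set R : ℝ := max R' 0 + 1 with hRdef
  have hRpos : 0 < R := by
    have : (0:ℝ) ≤ max R' 0 := le_max_right _ _
    linarith
  have hR'lt : R' < R := by
    have : R' ≤ max R' 0 := le_max_left _ _
    linarith
  have hSU : {x ∈ X | ∀ y ∈ X, μ x ≤ μ y} ⊆ Metric.closedBall xs R := by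
    intro z hz
    have := hR' hz
    exact Metric.closedBall_subset_closedBall hR'lt.le this
  -- key construction: project far points to the sphere of radius R
  have key : ∀ x ∈ X, R < ‖x - xs‖ → ∃ y, y ∈ X ∧ ‖y - xs‖ = R ∧
      (μ y - μ xs) * ‖x - xs‖ ≤ R * (μ x - μ xs) := by
    intro x hx hd
    set d : ℝ := ‖x - xs‖ with hddef
    have hdpos : 0 < d := lt_trans hRpos hd
    set t : ℝ := R / d with htdef
    have ht0 : 0 < t := div_pos hRpos hdpos
    have ht1 : t < 1 := (div_lt_one hdpos).2 hd
    refine ⟨xs + t • (x - xs), ?_, ?_, ?_⟩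
    · have hcomb := hXconv hxsX hx (by linarith : (0:ℝ) ≤ 1 - t) ht0.le (by ring)
      have : (1 - t) • xs + t • x = xs + t • (x - xs) := by module
      rwa [this] at hcomb
    · have : xs + t • (x - xs) - xs = t • (x - xs) := by abel
      rw [this, norm_smul, Real.norm_eq_abs, abs_of_pos ht0, ← hddef, htdef]
      field_simp
    · have hcvx := hμconv.2 (mem_univ xs) (mem_univ x)
        (by linarith : (0:ℝ) ≤ 1 - t) ht0.le (by ring)
      have heq : (1 - t) • xs + t • x = xs + t • (x - xs) := by module
      rw [heq] at hcvx
      simp only [smul_eq_mul] at hcvx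
      have : μ (xs + t • (x - xs)) - μ xs ≤ t * (μ x - μ xs) := by linarith
      have h2 : (μ (xs + t • (x - xs)) - μ xs) * d ≤ t * (μ x - μ xs) * d := by
        nlinarith
      have htd : t * d = R := by rw [htdef]; field_simp
      have h3 : t * (μ x - μ xs) * d = R * (μ x - μ xs) := by rw [← htd]; ring
      linarith
  by_cases hKne : (X ∩ Metric.sphere xs R).Nonempty
  · -- compact slice, positive minimum gap δ
    have hK : IsCompact (X ∩ Metric.sphere xs R) :=
      (isCompact_sphere xs R).inter_left hXcl
    obtain ⟨y0, hy0, hy0min⟩ := hK.exists_isMinOn hKne hμcont.continuousOn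
    set δ : ℝ := μ y0 - μ xs with hδdef
    have hδpos : 0 < δ := by
      rcases lt_or_ge 0 δ with h | h
      · exact h
      · exfalso
        have hy0X : y0 ∈ X := hy0.1
        have h1 : μ y0 ≤ μ xs := by linarith [hδdef ▸ h]
        have h2 : ∀ y ∈ X, μ y0 ≤ μ y := fun y hy => h1.trans (hxsmin y hy)
        have := hR' ⟨hy0X, h2⟩
        have hdist : dist y0 xs = R := hy0.2
        rw [Metric.mem_closedBall] at this
        linarith
    refine ⟨Metric.closedBall xs R, δ / R, Metric.isBounded_closedBall, hSU,
      div_pos hδpos hRpos, ?_⟩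
    rintro x ⟨hxX, hxU⟩
    have hd : R < ‖x - xs‖ := by
      rw [Metric.mem_closedBall, not_le, dist_eq_norm] at hxU
      exact hxU
    obtain ⟨y, hyX, hynorm, hineq⟩ := key x hxX hd
    have hymem : y ∈ X ∩ Metric.sphere xs R := ⟨hyX, by
      rw [Metric.mem_sphere, dist_eq_norm]; exact hynorm⟩
    have hδy : δ ≤ μ y - μ xs := by
      have hle : μ y0 ≤ μ y := hy0min hymem
      simp only [hδdef]
      linarith
    have hdpos : 0 < ‖x - xs‖ := lt_trans hRpos hd
    rw [ge_iff_le, div_mul_eq_mul_div, div_le_iff₀ hRpos]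
    nlinarith
  · -- no points of X on the sphere ⇒ X \ closedBall is empty
    refine ⟨Metric.closedBall xs R, 1, Metric.isBounded_closedBall, hSU,
      one_pos, ?_⟩
    rintro x ⟨hxX, hxU⟩
    exfalso
    have hd : R < ‖x - xs‖ := by
      rw [Metric.mem_closedBall, not_le, dist_eq_norm] at hxU
      exact hxU
    obtain ⟨y, hyX, hynorm, -⟩ := key x hxX hd
    exact hKne ⟨y, hyX, by rw [Metric.mem_sphere, dist_eq_norm]; exact hynorm⟩
end

section
/- Let X ⊆ ℝ^N be convex, μ₁ convex, μ₂ smooth convex with ∇μ₂ Lipschitz on X with constant L. If 0 < α ≤ 1/(β + L/2) for some β ∈ (0,1), then the forward-backward splitting iterate x^{k+1} = y_α(x^k) satisfies μ(x^{k+1}) ≤ μ(x^k) − β‖x^{k+1} − x^k‖², where μ = μ₁ + μ₂. -/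
open RealInnerProductSpace

theorem descent_lemma_aux {N : ℕ}
    (μ₂ : EuclideanSpace ℝ (Fin N) → ℝ)
    (g : EuclideanSpace ℝ (Fin N) → EuclideanSpace ℝ (Fin N))
    (hg : ∀ x, HasGradientAt μ₂ (g x) x)
    (L : ℝ) (x y : EuclideanSpace ℝ (Fin N))
    (hLseg : ∀ t ∈ Set.Icc (0:ℝ) 1, ‖g (x + t • (y - x)) - g x‖ ≤ L * ‖t • (y - x)‖) :
    μ₂ y ≤ μ₂ x + ⟪g x, y - x⟫ + L / 2 * ‖y - x‖ ^ 2 := by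
  set d := y - x with hd
  set φ : ℝ → ℝ := fun t => μ₂ (x + t • d) - t * ⟪g x, d⟫ - L / 2 * t ^ 2 * ‖d‖ ^ 2 with hφ
  have hder : ∀ t : ℝ, HasDerivAt φ
      (⟪g (x + t • d), d⟫ - ⟪g x, d⟫ - L * t * ‖d‖ ^ 2) t := by
    intro t
    have hγ : HasDerivAt (fun t : ℝ => x + t • d) d t := by
      simpa using ((hasDerivAt_id t).smul_const d).const_add x
    have h1 : HasDerivAt (fun t : ℝ => μ₂ (x + t • d)) ⟪g (x + t • d), d⟫ t := by
      have := (hg (x + t • d)).hasFDerivAt.comp_hasDerivAt t hγ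
      simpa [Function.comp_def] using this
    have h2 : HasDerivAt (fun t : ℝ => t * ⟪g x, d⟫) ⟪g x, d⟫ t := by
      simpa using (hasDerivAt_id t).mul_const ⟪g x, d⟫
    have h3 : HasDerivAt (fun t : ℝ => L / 2 * t ^ 2 * ‖d‖ ^ 2)
        (L * t * ‖d‖ ^ 2) t := by
      have h4 : HasDerivAt (fun t : ℝ => t ^ 2) (2 * t) t := by
        simpa using hasDerivAt_pow 2 t
      have := (h4.const_mul (L / 2)).mul_const (‖d‖ ^ 2)
      have e : L * t * ‖d‖ ^ 2 = L / 2 * (2 * t) * ‖d‖ ^ 2 := by ring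
      rw [e]; exact this
    exact (h1.sub h2).sub h3
  have hanti : AntitoneOn φ (Set.Icc (0:ℝ) 1) := by
    apply antitoneOn_of_deriv_nonpos (convex_Icc 0 1)
    · exact fun t _ => (hder t).differentiableAt.continuousAt.continuousWithinAt
    · exact fun t _ => (hder t).differentiableAt.differentiableWithinAt
    · intro t ht
      rw [interior_Icc] at ht
      rw [(hder t).deriv]
      have hcs : ⟪g (x + t • d) - g x, d⟫ ≤ ‖g (x + t • d) - g x‖ * ‖d‖ :=
        real_inner_le_norm _ _
      have hlip := hLseg t ⟨ht.1.le, ht.2.le⟩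
      have hnorm : ‖t • d‖ = t * ‖d‖ := by
        rw [norm_smul, Real.norm_eq_abs, abs_of_nonneg ht.1.le]
      rw [inner_sub_left] at hcs
      rw [hnorm] at hlip
      nlinarith [norm_nonneg d]
  have h01 := hanti (Set.left_mem_Icc.2 one_pos.le) (Set.right_mem_Icc.2 one_pos.le) one_pos.le
  simp only [hφ, zero_smul, add_zero, one_smul, one_pow, zero_pow, one_mul, zero_mul] at h01
  have hxy : x + d = y := by rw [hd]; abel
  rw [hxy] at h01
  linarith

/-- Lemma 2.2: descent property of one forward-backward splitting step. -/
theorem forward_backward_descent {N : ℕ}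
    (X : Set (EuclideanSpace ℝ (Fin N)))
    (μ₁ μ₂ : EuclideanSpace ℝ (Fin N) → ℝ)
    (hXne : X.Nonempty) (hXconv : Convex ℝ X) (hXcl : IsClosed X)
    (hμ₁ : ConvexOn ℝ Set.univ μ₁) (hμ₂ : ConvexOn ℝ Set.univ μ₂)
    (g : EuclideanSpace ℝ (Fin N) → EuclideanSpace ℝ (Fin N))
    (hg : ∀ x, HasGradientAt μ₂ (g x) x)
    (L : ℝ) (hLip : ∀ x ∈ X, ∀ x' ∈ X, ‖g x - g x'‖ ≤ L * ‖x - x'‖)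
    (β : ℝ) (hβ : β ∈ Set.Ioo (0 : ℝ) 1)
    (α : ℝ) (hα : 0 < α) (hαle : α ≤ 1 / (β + L / 2))
    (xk xk1 : EuclideanSpace ℝ (Fin N)) (hxk : xk ∈ X) (hxk1 : xk1 ∈ X)
    -- xk1 = y_α(xk) minimizes the proximal subproblem at xk :
    (hmin : ∀ z ∈ X,
        μ₁ xk1 + ⟪g xk, xk1⟫ + (2 * α)⁻¹ * ‖xk1 - xk‖ ^ 2 ≤
          μ₁ z + ⟪g xk, z⟫ + (2 * α)⁻¹ * ‖z - xk‖ ^ 2) :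
    μ₁ xk1 + μ₂ xk1 ≤ μ₁ xk + μ₂ xk - β * ‖xk1 - xk‖ ^ 2 := by
  by_cases hne : xk1 = xk
  · simp [hne]
  -- L ≥ 0
  have hDpos : (0:ℝ) < ‖xk1 - xk‖ := by
    rw [norm_pos_iff]
    exact sub_ne_zero.2 hne
  have hL0 : 0 ≤ L := by
    have h := hLip xk1 hxk1 xk hxk
    nlinarith [norm_nonneg (g xk1 - g xk)]
  have hBpos : 0 < β + L / 2 := by linarith [hβ.1]
  set c : ℝ := (2 * α)⁻¹ with hc
  have hcpos : 0 < c := by positivity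
  set D : ℝ := ‖xk1 - xk‖ ^ 2 with hD
  have hDpos' : 0 < D := by positivity
  set A : ℝ := μ₁ xk1 + ⟪g xk, xk1⟫ with hA
  set B : ℝ := μ₁ xk + ⟪g xk, xk⟫ with hB
  -- strong proximal inequality
  have hforall : ∀ t : ℝ, t ∈ Set.Ioc (0:ℝ) 1 → A - (B - 2 * c * D) ≤ c * t * D := by
    intro t ht
    set z : EuclideanSpace ℝ (Fin N) := xk1 + t • (xk - xk1) with hz
    have hzX : z ∈ X := hXconv.add_smul_sub_mem hxk1 hxk ⟨ht.1.le, ht.2⟩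
    have hzcomb : z = (1 - t) • xk1 + t • xk := by
      rw [hz]; module
    have hμ₁z : μ₁ z ≤ (1 - t) * μ₁ xk1 + t * μ₁ xk := by
      have := hμ₁.2 (Set.mem_univ xk1) (Set.mem_univ xk) (by linarith [ht.2] : (0:ℝ) ≤ 1 - t)
        ht.1.le (by ring)
      simpa [hzcomb, smul_eq_mul] using this
    have hinnz : ⟪g xk, z⟫ = (1 - t) * ⟪g xk, xk1⟫ + t * ⟪g xk, xk⟫ := by
      rw [hzcomb, inner_add_right, real_inner_smul_right, real_inner_smul_right]
    have hnormz : ‖z - xk‖ ^ 2 = (1 - t) ^ 2 * D := by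
      have hzsub : z - xk = (1 - t) • (xk1 - xk) := by
        rw [hz]; module
      rw [hzsub, norm_smul, Real.norm_eq_abs, mul_pow, sq_abs, hD]
    have hm := hmin z hzX
    rw [hinnz, hnormz] at hm
    have h2 : t * A ≤ t * (B - 2 * c * D + c * t * D) := by
      rw [hA, hB]; nlinarith [hm]
    have h3 : A ≤ B - 2 * c * D + c * t * D := le_of_mul_le_mul_left h2 ht.1
    linarith
  have key : A ≤ B - 2 * c * D := by
    by_contra hcon
    push_neg at hcon
    set r : ℝ := A - (B - 2 * c * D) with hr
    have hrpos : 0 < r := by rw [hr]; linarith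
    set ε : ℝ := r / (2 * (c * D + 1)) with hε
    have hεpos : 0 < ε := by positivity
    have hεeq : ε * (2 * (c * D + 1)) = r := div_mul_cancel₀ _ (by positivity)
    set t : ℝ := min 1 ε with ht
    have htIoc : t ∈ Set.Ioc (0:ℝ) 1 := ⟨lt_min one_pos hεpos, min_le_left _ _⟩
    have hb := hforall t htIoc
    have htε : t ≤ ε := min_le_right _ _
    have h1 : c * t * D ≤ c * ε * D :=
      mul_le_mul_of_nonneg_right (mul_le_mul_of_nonneg_left htε hcpos.le) hDpos'.le
    have h2 : c * ε * D < r := by nlinarith [hεpos, hcpos.le, hDpos'.le]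
    linarith
  -- descent lemma
  have hdesc : μ₂ xk1 ≤ μ₂ xk + ⟪g xk, xk1 - xk⟫ + L / 2 * ‖xk1 - xk‖ ^ 2 := by
    apply descent_lemma_aux μ₂ g hg L xk xk1
    intro t htI
    have hzX : xk + t • (xk1 - xk) ∈ X := hXconv.add_smul_sub_mem hxk hxk1 htI
    have := hLip _ hzX xk hxk
    simpa using this
  rw [inner_sub_right] at hdesc
  -- combine
  have h2c : α⁻¹ = 2 * c := by
    rw [hc]; field_simp
  have h5 : β + L / 2 ≤ α⁻¹ := by
    have h6 : α * (β + L / 2) ≤ 1 := (le_div_iff₀ hBpos).mp hαle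
    rw [← one_div, le_div_iff₀ hα]
    nlinarith
  have h7 : (β + L / 2) * D ≤ 2 * c * D := by
    rw [← h2c]
    exact mul_le_mul_of_nonneg_right h5 hDpos'.le
  rw [hA, hB] at key
  have : L / 2 * ‖xk1 - xk‖ ^ 2 = L / 2 * D := by rw [hD]
  nlinarith [key, hdesc, h7]
end

section
/- Under assumptions (A1) and (A2'), if μ = μ₁ + μ₂ is coercive on X and {x^k} is generated by x^{k+1} = y_α(x^k) with 0 < α ≤ 1/(β + L_{μ₂}/2) for some β ∈ (0,1), then the sequence {x^k} is bounded, ‖x^{k+1} − x^k‖ → 0, every limit point of {x^k} minimizes μ over X, and μ(x^k) → inf_{x∈X} μ(x). -/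
set_option linter.unusedSectionVars false
set_option linter.unusedVariables false
set_option maxHeartbeats 1000000

open RealInnerProductSpace Filter

section Aux

variable {E : Type*} [NormedAddCommGroup E] [InnerProductSpace ℝ E] [CompleteSpace E]

lemma line_hasDerivAt (u v : E) (t : ℝ) :
    HasDerivAt (fun s : ℝ => u + s • (v - u)) (v - u) t := by
  simpa using ((hasDerivAt_id t).smul_const (v - u)).const_add u

lemma comp_line_hasDerivAt {μ₂ : E → ℝ} {g : E → E} (hg : ∀ x, HasGradientAt μ₂ (g x) x)
    (u v : E) (t : ℝ) :
    HasDerivAt (fun s : ℝ => μ₂ (u + s • (v - u))) ⟪g (u + t • (v - u)), v - u⟫ t := by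
  have h1 := (hg (u + t • (v - u))).hasFDerivAt
  have h2 := h1.comp_hasDerivAt t (line_hasDerivAt u v t)
  simp at h2
  exact h2

lemma nhds_Ioo_neBot : (nhdsWithin (0:ℝ) (Set.Ioo (0:ℝ) 1)).NeBot := by
  apply mem_closure_iff_nhdsWithin_neBot.1
  rw [closure_Ioo one_ne_zero.symm]
  exact Set.mem_Icc.2 ⟨le_refl 0, zero_le_one⟩

lemma le_of_Ioo {A B c : ℝ} (h : ∀ t ∈ Set.Ioo (0:ℝ) 1, A + (1-t)*c ≤ B) : A + c ≤ B := by
  have := nhds_Ioo_neBot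
  have ht : Tendsto (fun t : ℝ => A + (1-t)*c) (nhdsWithin 0 (Set.Ioo (0:ℝ) 1))
      (nhds (A + c)) := by
    have : ContinuousAt (fun t : ℝ => A + (1-t)*c) 0 := by fun_prop
    simpa using this.continuousWithinAt.tendsto
  exact le_of_tendsto ht (eventually_nhdsWithin_of_forall h)

lemma grad_convex_le {μ₂ : E → ℝ} (hμ₂ : ConvexOn ℝ Set.univ μ₂) {g : E → E}
    (hg : ∀ x, HasGradientAt μ₂ (g x) x) (u v : E) :
    μ₂ u + ⟪g u, v - u⟫ ≤ μ₂ v := by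
  have hd : HasDerivAt (fun s : ℝ => μ₂ (u + s • (v - u))) ⟪g u, v - u⟫ 0 := by
    have := comp_line_hasDerivAt hg u v 0
    simpa using this
  have := nhds_Ioo_neBot
  have hslope : Tendsto (slope (fun s : ℝ => μ₂ (u + s • (v - u))) 0)
      (nhdsWithin 0 (Set.Ioo (0:ℝ) 1)) (nhds ⟪g u, v - u⟫) := by
    have h1 := hasDerivAt_iff_tendsto_slope.1 hd
    exact h1.mono_left (nhdsWithin_mono 0 (fun t ht => ne_of_gt ht.1))
  have hle : ∀ t ∈ Set.Ioo (0:ℝ) 1,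
      slope (fun s : ℝ => μ₂ (u + s • (v - u))) 0 t ≤ μ₂ v - μ₂ u := by
    intro t ht
    have hcx := hμ₂.2 (Set.mem_univ u) (Set.mem_univ v)
      (by linarith [ht.2] : (0:ℝ) ≤ 1 - t) (le_of_lt ht.1) (by ring)
    have he : (1-t) • u + t • v = u + t • (v - u) := by
      rw [sub_smul, one_smul, smul_sub]; abel
    rw [he] at hcx
    rw [slope_def_field]
    simp only [zero_smul, add_zero, sub_zero]
    rw [div_le_iff₀ ht.1]
    simp only [smul_eq_mul] at hcx
    nlinarith [hcx]
  have := le_of_tendsto hslope (eventually_nhdsWithin_of_forall hle)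
  linarith

lemma combo_norm_sq (u v w : E) (t : ℝ) :
    ‖((1-t)•u + t•v) - w‖^2
      = (1-t)*‖u-w‖^2 + t*‖v-w‖^2 - t*(1-t)*‖u-v‖^2 := by
  have h : ((1-t)•u + t•v) - w = (1-t)•(u-w) + t•(v-w) := by
    rw [smul_sub, smul_sub, sub_smul, sub_smul, one_smul, one_smul]; abel
  have e : u - v = (u-w) - (v-w) := by abel
  rw [h, e]
  simp only [← real_inner_self_eq_norm_sq, inner_add_add_self, inner_sub_sub_self,
    real_inner_smul_left, real_inner_smul_right]
  ring

lemma strong_min {X : Set E} (hX : Convex ℝ X) {f : E → ℝ} (hf : ConvexOn ℝ Set.univ f)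
    {c : ℝ} (hc : 0 ≤ c) {w a : E} (ha : a ∈ X)
    (hmin : ∀ z ∈ X, f a + c*‖a - w‖^2 ≤ f z + c*‖z - w‖^2) :
    ∀ z ∈ X, f a + c*‖a - w‖^2 + c*‖z - a‖^2 ≤ f z + c*‖z - w‖^2 := by
  intro z hz
  rw [norm_sub_rev z a]
  have key : ∀ t ∈ Set.Ioo (0:ℝ) 1,
      (f a + c*‖a - w‖^2) + (1-t)*(c*‖a - z‖^2) ≤ f z + c*‖z - w‖^2 := by
    intro t ht
    have h0t : (0:ℝ) ≤ 1 - t := by linarith [ht.2]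
    have hm : (1-t) • a + t • z ∈ X := hX ha hz h0t (le_of_lt ht.1) (by ring)
    have h1 := hmin _ hm
    have h2 : f ((1-t) • a + t • z) ≤ (1-t) * f a + t * f z := by
      simpa [smul_eq_mul] using hf.2 (Set.mem_univ a) (Set.mem_univ z) h0t
        (le_of_lt ht.1) (by ring)
    have h3 := combo_norm_sq a z w t
    rw [h3] at h1
    have h4 : t * (f a + c*‖a - w‖^2 + (1-t)*(c*‖a-z‖^2)) ≤ t * (f z + c*‖z - w‖^2) := by
      nlinarith [h1, h2, mul_le_mul_of_nonneg_left h2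
        (le_of_lt (show (0:ℝ) < 1 from by linarith [ht.1]))]
    exact le_of_mul_le_mul_left (by linarith [h4]) ht.1
  have := le_of_Ioo key
  linarith

lemma descent_lemma {X : Set E} (hX : Convex ℝ X) {μ₂ : E → ℝ} {g : E → E}
    (hg : ∀ x, HasGradientAt μ₂ (g x) x) {L : ℝ}
    (hLip : ∀ x ∈ X, ∀ x' ∈ X, ‖g x - g x'‖ ≤ L * ‖x - x'‖)
    {u v : E} (hu : u ∈ X) (hv : v ∈ X) :
    μ₂ v ≤ μ₂ u + ⟪g u, v - u⟫ + L/2 * ‖v - u‖^2 := by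
  set φ : ℝ → ℝ := fun t => μ₂ (u + t • (v - u)) - t * ⟪g u, v - u⟫ - L * t^2/2 * ‖v - u‖^2
    with hφdef
  have hmem : ∀ t ∈ Set.Icc (0:ℝ) 1, u + t • (v - u) ∈ X := by
    intro t ht
    have : (1 - t) • u + t • v ∈ X := hX hu hv (by linarith [ht.1, ht.2]) ht.1 (by ring)
    convert this using 1
    rw [sub_smul, one_smul, smul_sub]; abel
  have hφ' : ∀ t, HasDerivAt φ
      (⟪g (u + t • (v - u)), v - u⟫ - ⟪g u, v - u⟫ - L * t * ‖v - u‖^2) t := by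
    intro t
    have h1 := comp_line_hasDerivAt hg u v t
    have h2 : HasDerivAt (fun s : ℝ => s * ⟪g u, v - u⟫) ⟪g u, v - u⟫ t := by
      simpa using (hasDerivAt_id t).mul_const _
    have h3 : HasDerivAt (fun s : ℝ => L * s^2/2 * ‖v - u‖^2) (L * t * ‖v - u‖^2) t := by
      have : HasDerivAt (fun s : ℝ => s^2) (2*t) t := by
        simpa using hasDerivAt_pow 2 t
      have := ((this.const_mul L).div_const 2).mul_const (‖v - u‖^2)
      exact this.congr_deriv (by ring)
    exact (h1.sub h2).sub h3
  have hanti : AntitoneOn φ (Set.Icc (0:ℝ) 1) := by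
    apply antitoneOn_of_deriv_nonpos (convex_Icc 0 1)
    · exact fun t _ => ((hφ' t).continuousAt).continuousWithinAt
    · exact fun t _ => ((hφ' t).differentiableAt).differentiableWithinAt
    · intro t ht
      rw [interior_Icc] at ht
      rw [(hφ' t).deriv]
      have hct : u + t • (v - u) ∈ X := hmem t ⟨le_of_lt ht.1, le_of_lt ht.2⟩
      have hlip := hLip _ hct _ hu
      have h1 : ⟪g (u + t • (v - u)), v - u⟫ - ⟪g u, v - u⟫
          = ⟪g (u + t • (v - u)) - g u, v - u⟫ := by
        rw [inner_sub_left]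
      have h2 : ⟪g (u + t • (v - u)) - g u, v - u⟫ ≤ ‖g (u + t • (v - u)) - g u‖ * ‖v - u‖ :=
        real_inner_le_norm _ _
      have h3 : ‖(u + t • (v - u)) - u‖ = t * ‖v - u‖ := by
        simp [norm_smul, abs_of_pos ht.1]
      have h4 : ‖g (u + t • (v - u)) - g u‖ ≤ L * (t * ‖v - u‖) := by
        rw [← h3]; exact hlip
      have h5 : ‖g (u + t • (v - u)) - g u‖ * ‖v - u‖ ≤ L * (t * ‖v - u‖) * ‖v - u‖ :=
        mul_le_mul_of_nonneg_right h4 (norm_nonneg _)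
      rw [h1]
      nlinarith [h2, h5]
  have h01 := hanti (Set.mem_Icc.2 ⟨le_refl 0, zero_le_one⟩)
      (Set.mem_Icc.2 ⟨zero_le_one, le_refl 1⟩) zero_le_one
  have e0 : φ 0 = μ₂ u := by simp [hφdef]
  have e1 : φ 1 = μ₂ v - ⟪g u, v - u⟫ - L/2 * ‖v - u‖^2 := by
    simp only [hφdef, one_smul, one_mul, one_pow, add_sub_cancel]
    ring
  rw [e0, e1] at h01
  linarith

lemma inner_convexOn (p : E) : ConvexOn ℝ (Set.univ : Set E) (fun z => ⟪p, z⟫) := by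
  refine ⟨convex_univ, fun a _ b _ s t hs ht hst => le_of_eq ?_⟩
  simp [inner_add_right, real_inner_smul_right, smul_eq_mul]

lemma exists_min [ProperSpace E] {X : Set E} (hXne : X.Nonempty) (hXcl : IsClosed X)
    {μ : E → ℝ} (hc : Continuous μ)
    (hcoer : ∀ M : ℝ, ∃ R : ℝ, ∀ x ∈ X, R ≤ ‖x‖ → M ≤ μ x) :
    ∃ p ∈ X, ∀ w ∈ X, μ p ≤ μ w := by
  obtain ⟨p0, hp0⟩ := hXne
  obtain ⟨R, hR⟩ := hcoer (μ p0)
  set K := X ∩ Metric.closedBall (0:E) (max R ‖p0‖) with hK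
  have hKc : IsCompact K := (isCompact_closedBall (0:E) _).inter_left hXcl
  have hp0K : p0 ∈ K :=
    ⟨hp0, by rw [mem_closedBall_zero_iff]; exact le_max_right _ _⟩
  obtain ⟨p, hpK, hpmin⟩ := hKc.exists_isMinOn ⟨p0, hp0K⟩ hc.continuousOn
  refine ⟨p, hpK.1, fun w hw => ?_⟩
  by_cases hwK : w ∈ Metric.closedBall (0:E) (max R ‖p0‖)
  · exact isMinOn_iff.1 hpmin w ⟨hw, hwK⟩
  · have hRw : R ≤ ‖w‖ := by
      rw [mem_closedBall_zero_iff] at hwK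
      push_neg at hwK
      exact le_of_lt (lt_of_le_of_lt (le_max_left _ _) hwK)
    have h1 := hR w hw hRw
    have h2 := isMinOn_iff.1 hpmin p0 hp0K
    linarith

end Aux

/-- Proposition 2.5: convergence of the forward-backward splitting method for a
coercive objective μ = μ₁ + μ₂. -/
theorem forward_backward_convergence {N : ℕ}
    (X : Set (EuclideanSpace ℝ (Fin N)))
    (μ₁ μ₂ : EuclideanSpace ℝ (Fin N) → ℝ)
    (hXne : X.Nonempty) (hXconv : Convex ℝ X) (hXcl : IsClosed X)
    (hμ₁ : ConvexOn ℝ Set.univ μ₁) (hμ₁c : Continuous μ₁)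
    (hμ₂ : ConvexOn ℝ Set.univ μ₂)
    (g : EuclideanSpace ℝ (Fin N) → EuclideanSpace ℝ (Fin N))
    (hg : ∀ x, HasGradientAt μ₂ (g x) x)
    (L : ℝ) (hLip : ∀ x ∈ X, ∀ x' ∈ X, ‖g x - g x'‖ ≤ L * ‖x - x'‖)
    -- coercivity of μ = μ₁ + μ₂ on X :
    (hcoer : ∀ M : ℝ, ∃ R : ℝ, ∀ x ∈ X, R ≤ ‖x‖ → M ≤ μ₁ x + μ₂ x)
    (β : ℝ) (hβ : β ∈ Set.Ioo (0 : ℝ) 1)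
    (α : ℝ) (hα : 0 < α) (hαle : α ≤ 1 / (β + L / 2))
    (x : ℕ → EuclideanSpace ℝ (Fin N)) (hx : ∀ k, x k ∈ X)
    -- x (k+1) = y_α(x k) minimizes the proximal subproblem at x k :
    (hit : ∀ k, ∀ z ∈ X,
        μ₁ (x (k+1)) + ⟪g (x k), x (k+1)⟫ + (2 * α)⁻¹ * ‖x (k+1) - x k‖ ^ 2 ≤
          μ₁ z + ⟪g (x k), z⟫ + (2 * α)⁻¹ * ‖z - x k‖ ^ 2) :
    (∃ C : ℝ, ∀ k, ‖x k‖ ≤ C) ∧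
      Tendsto (fun k => ‖x (k+1) - x k‖) atTop (nhds 0) ∧
      (∀ z, MapClusterPt z atTop x → z ∈ X ∧ ∀ w ∈ X, μ₁ z + μ₂ z ≤ μ₁ w + μ₂ w) ∧
      Tendsto (fun k => μ₁ (x k) + μ₂ (x k)) atTop
        (nhds (sInf ((fun w => μ₁ w + μ₂ w) '' X))) := by
  by_cases hL0 : 0 ≤ L
  case neg =>
    -- degenerate case: L < 0 forces X to be a single point
    push_neg at hL0
    have hsub : ∀ a ∈ X, ∀ b ∈ X, a = b := by
      intro a ha b hb
      by_contra hne
      have h1 := hLip a ha b hb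
      have h2 : L * ‖a - b‖ < 0 :=
        mul_neg_of_neg_of_pos hL0 (by rwa [norm_sub_pos_iff])
      linarith [norm_nonneg (g a - g b)]
    have hxx : ∀ k, x k = x 0 := fun k => hsub _ (hx k) _ (hx 0)
    have hxconst : x = fun _ => x 0 := funext hxx
    refine ⟨⟨‖x 0‖, fun k => by rw [hxx k]⟩, ?_, ?_, ?_⟩
    · have : (fun k => ‖x (k+1) - x k‖) = fun _ => (0:ℝ) :=
        funext fun k => by rw [hxx (k+1), hxx k, sub_self, norm_zero]
      rw [this]; exact tendsto_const_nhds
    · intro z hz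
      have h1 : Tendsto x atTop (nhds (x 0)) := by
        rw [hxconst]; exact tendsto_const_nhds
      have h2 : (nhds z ⊓ Filter.map x atTop).NeBot := hz
      have h3 : (nhds z ⊓ nhds (x 0)).NeBot :=
        h2.mono (inf_le_inf_left _ h1)
      have hzx : z = x 0 := eq_of_nhds_neBot h3
      refine ⟨hzx ▸ hx 0, fun w hw => ?_⟩
      rw [hzx, hsub w hw _ (hx 0)]
    · have himg : (fun w => μ₁ w + μ₂ w) '' X = {μ₁ (x 0) + μ₂ (x 0)} := by
        apply Set.Subset.antisymm
        · rintro _ ⟨w, hw, rfl⟩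
          simp [hsub w hw _ (hx 0)]
        · rintro _ rfl
          exact ⟨x 0, hx 0, rfl⟩
      rw [himg, csInf_singleton]
      have : (fun k => μ₁ (x k) + μ₂ (x k)) = fun _ => μ₁ (x 0) + μ₂ (x 0) :=
        funext fun k => by rw [hxx k]
      rw [this]; exact tendsto_const_nhds
  case pos =>
  have hβ0 : 0 < β := hβ.1
  set c : ℝ := (2*α)⁻¹ with hc
  have hcpos : 0 < c := by positivity
  have h2c : β + L/2 ≤ 2*c := by
    have hden : 0 < β + L/2 := by linarith
    rw [le_div_iff₀ hden] at hαle
    have h1 : β + L/2 ≤ 1/α := by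
      rw [le_div_iff₀ hα]; linarith [mul_comm α (β + L/2)]
    have h2 : (1:ℝ)/α = 2*c := by
      rw [hc]; field_simp
    linarith [h2 ▸ h1]
  -- convexity of the subproblem objectives
  have hFconv : ∀ k, ConvexOn ℝ (Set.univ : Set (EuclideanSpace ℝ (Fin N)))
      (fun q => μ₁ q + ⟪g (x k), q⟫) := fun k => hμ₁.add (inner_convexOn _)
  -- sufficient decrease
  have hsd : ∀ k, (μ₁ (x (k+1)) + μ₂ (x (k+1))) + β*‖x (k+1) - x k‖^2
      ≤ μ₁ (x k) + μ₂ (x k) := by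
    intro k
    have h1 := strong_min hXconv (hFconv k) hcpos.le (hx (k+1))
      (fun z hz => hit k z hz) (x k) (hx k)
    rw [sub_self, norm_zero, norm_sub_rev (x k)] at h1
    have h2 := descent_lemma hXconv hg hLip (hx k) (hx (k+1))
    rw [inner_sub_right] at h2
    have h3 : (2*c - L/2 - β) * ‖x (k+1) - x k‖^2 ≥ 0 :=
      mul_nonneg (by linarith) (sq_nonneg _)
    simp only [ne_eq, OfNat.ofNat_ne_zero, not_false_eq_true, zero_pow, mul_zero,
      add_zero] at h1
    nlinarith [h1, h2, h3]
  have hAnti : Antitone (fun k => μ₁ (x k) + μ₂ (x k)) :=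
    antitone_nat_of_succ_le fun k => by nlinarith [hsd k, sq_nonneg ‖x (k+1) - x k‖]
  -- boundedness
  obtain ⟨R, hR⟩ := hcoer (μ₁ (x 0) + μ₂ (x 0) + 1)
  have hbd : ∀ k, ‖x k‖ ≤ R := by
    intro k
    by_contra h
    push_neg at h
    have h1 := hR (x k) (hx k) h.le
    have h2 := hAnti (Nat.zero_le k)
    simp only at h2
    linarith
  -- continuity of μ
  have hμ₂c : Continuous μ₂ := continuous_iff_continuousAt.2 fun y => (hg y).continuousAt
  have hμc : Continuous (fun w => μ₁ w + μ₂ w) := hμ₁c.add hμ₂c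
  -- minimizer over X
  obtain ⟨p, hpX, hpmin⟩ := exists_min hXne hXcl hμc hcoer
  have hbdd : BddBelow (Set.range fun k => μ₁ (x k) + μ₂ (x k)) :=
    ⟨μ₁ p + μ₂ p, by rintro _ ⟨k, rfl⟩; exact hpmin _ (hx k)⟩
  have hμlim : Tendsto (fun k => μ₁ (x k) + μ₂ (x k)) atTop
      (nhds (⨅ k, μ₁ (x k) + μ₂ (x k))) := tendsto_atTop_ciInf hAnti hbdd
  -- ‖x (k+1) - x k‖ → 0
  have hμlim' : Tendsto (fun k => μ₁ (x (k+1)) + μ₂ (x (k+1))) atTop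
      (nhds (⨅ k, μ₁ (x k) + μ₂ (x k))) :=
    hμlim.comp (tendsto_add_atTop_nat 1)
  have hdiff : Tendsto (fun k => (μ₁ (x k) + μ₂ (x k)) - (μ₁ (x (k+1)) + μ₂ (x (k+1))))
      atTop (nhds 0) := by
    have := hμlim.sub hμlim'
    simpa using this
  have hsq : Tendsto (fun k => ‖x (k+1) - x k‖^2) atTop (nhds 0) := by
    apply squeeze_zero (fun k => sq_nonneg _)
      (g := fun k => β⁻¹ * ((μ₁ (x k) + μ₂ (x k)) - (μ₁ (x (k+1)) + μ₂ (x (k+1)))))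
    · intro k
      have h1 := hsd k
      rw [inv_mul_eq_div, le_div_iff₀ hβ0]
      linarith
    · have := hdiff.const_mul β⁻¹
      simpa using this
  have hΔ : Tendsto (fun k => ‖x (k+1) - x k‖) atTop (nhds 0) := by
    have h1 := (Real.continuous_sqrt.tendsto 0).comp hsq
    simp only [Function.comp_def, Real.sqrt_zero] at h1
    convert h1 using 2 with k
    rw [Real.sqrt_sq (norm_nonneg _)]
  -- cluster point property
  have hclus : ∀ z, MapClusterPt z atTop x →
      z ∈ X ∧ ∀ w ∈ X, μ₁ z + μ₂ z ≤ μ₁ w + μ₂ w := by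
    intro z hz
    obtain ⟨ψ, hψ, hψt⟩ := TopologicalSpace.FirstCountableTopology.tendsto_subseq hz
    have hzX : z ∈ X := hXcl.mem_of_tendsto hψt (Eventually.of_forall fun j => hx (ψ j))
    have hψat : Tendsto ψ atTop atTop := hψ.tendsto_atTop
    have hΔψ : Tendsto (fun j => ‖x (ψ j + 1) - x (ψ j)‖) atTop (nhds 0) := hΔ.comp hψat
    have hnext : Tendsto (fun j => x (ψ j + 1)) atTop (nhds z) := by
      have h1 : Tendsto (fun j => x (ψ j + 1) - x (ψ j)) atTop (nhds 0) :=
        tendsto_zero_iff_norm_tendsto_zero.2 hΔψ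
      have h2 := h1.add hψt
      simp only [zero_add] at h2
      convert h2 using 2 with j
      · show x (ψ j + 1) = x (ψ j + 1) - x (ψ j) + (x ∘ ψ) j
        simp [Function.comp]
    have hgψ : Tendsto (fun j => g (x (ψ j))) atTop (nhds (g z)) := by
      rw [tendsto_iff_norm_sub_tendsto_zero]
      apply squeeze_zero (fun j => norm_nonneg _)
        (g := fun j => L * ‖x (ψ j) - z‖)
      · exact fun j => hLip _ (hx _) _ hzX
      · have h1 : Tendsto (fun j => ‖x (ψ j) - z‖) atTop (nhds 0) := by
          have := tendsto_iff_norm_sub_tendsto_zero.1 hψt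
          simpa [Function.comp] using this
        have := h1.const_mul L
        simpa using this
    have hfix : ∀ w ∈ X, (μ₁ z + ⟪g z, z⟫) + c*‖z - z‖^2
        ≤ (μ₁ w + ⟪g z, w⟫) + c*‖w - z‖^2 := by
      intro w hw
      have hA : Tendsto (fun j => μ₁ (x (ψ j + 1)) + ⟪g (x (ψ j)), x (ψ j + 1)⟫
          + c * ‖x (ψ j + 1) - x (ψ j)‖^2) atTop
          (nhds (μ₁ z + ⟪g z, z⟫ + c * 0)) := by
        refine Tendsto.add (Tendsto.add ?_ ?_) ?_
        · exact (hμ₁c.tendsto z).comp hnext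
        · exact hgψ.inner hnext
        · have := (hΔψ.pow 2).const_mul c
          simpa using this
      have hB : Tendsto (fun j => μ₁ w + ⟪g (x (ψ j)), w⟫ + c * ‖w - x (ψ j)‖^2) atTop
          (nhds (μ₁ w + ⟪g z, w⟫ + c * ‖w - z‖^2)) := by
        refine Tendsto.add (Tendsto.add tendsto_const_nhds ?_) ?_
        · exact hgψ.inner tendsto_const_nhds
        · have h1 : Tendsto (fun j => x (ψ j)) atTop (nhds z) := by
            exact hψt
          exact (((tendsto_const_nhds.sub h1).norm.pow 2)).const_mul c
      have h3 := le_of_tendsto_of_tendsto' hA hB (fun j => hit (ψ j) w hw)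
      rw [sub_self, norm_zero]
      simp only [ne_eq, OfNat.ofNat_ne_zero, not_false_eq_true, zero_pow, mul_zero, add_zero]
      linarith [h3]
    have h5 := strong_min hXconv (hμ₁.add (inner_convexOn (g z))) hcpos.le hzX hfix
    refine ⟨hzX, fun w hw => ?_⟩
    have h6 := h5 w hw
    simp only [Pi.add_apply] at h6
    rw [sub_self, norm_zero] at h6
    simp only [ne_eq, OfNat.ofNat_ne_zero, not_false_eq_true, zero_pow, mul_zero,
      add_zero] at h6
    have h7 := grad_convex_le hμ₂ hg z w
    rw [inner_sub_right] at h7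
    linarith
  -- identify the limit of the values
  obtain ⟨z, hzcl, φ, hφ, hφt⟩ := tendsto_subseq_of_bounded
    (Metric.isBounded_closedBall (x := (0 : EuclideanSpace ℝ (Fin N))) (r := R))
    (fun n => mem_closedBall_zero_iff.2 (hbd n))
  have hzc : MapClusterPt z atTop x := MapClusterPt.of_comp hφ.tendsto_atTop hφt.mapClusterPt
  obtain ⟨hzX, hzmin⟩ := hclus z hzc
  have hμz : Tendsto (fun j => μ₁ (x (φ j)) + μ₂ (x (φ j))) atTop
      (nhds (μ₁ z + μ₂ z)) := by
    have := (hμc.tendsto z).comp hφt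
    exact this
  have hμℓ : Tendsto (fun j => μ₁ (x (φ j)) + μ₂ (x (φ j))) atTop
      (nhds (⨅ k, μ₁ (x k) + μ₂ (x k))) := hμlim.comp hφ.tendsto_atTop
  have hℓ : (⨅ k, μ₁ (x k) + μ₂ (x k)) = μ₁ z + μ₂ z := tendsto_nhds_unique hμℓ hμz
  have hzp : μ₁ z + μ₂ z = μ₁ p + μ₂ p :=
    le_antisymm (hzmin p hpX) (hpmin z hzX)
  have hsInf : sInf ((fun w => μ₁ w + μ₂ w) '' X) = μ₁ p + μ₂ p := by
    apply le_antisymm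
    · exact csInf_le ⟨μ₁ p + μ₂ p, by rintro _ ⟨w, hw, rfl⟩; exact hpmin w hw⟩
        ⟨p, hpX, rfl⟩
    · exact le_csInf ⟨_, ⟨p, hpX, rfl⟩⟩ (by rintro _ ⟨w, hw, rfl⟩; exact hpmin w hw)
  refine ⟨⟨R, hbd⟩, hΔ, hclus, ?_⟩
  rw [hsInf, ← hzp, ← hℓ]
  exact hμlim
end

section
/- Under assumptions (B1)–(B2), let {e^s} be a sequence of positive parameter vectors with ε_i^s ↓ 0 for every i and ε_i^s/ε_j^s → 1 for all i ≠ j, and let z^s be a minimizer over X of φ(x, e^s) = Σ_i ε_i^s f_i(x_i) + p(x). Then the sequence {z^s} is bounded, every limit point z̄ satisfies p(z̄) = p* = inf_{x∈X} p(x), and f(z̄) = Σ_i f_i(z̄_i) ≤ f** = inf { f(x) : x ∈ X, p(x) = p* }; i.e., every limit point solves min_{x ∈ argmin_X p} f(x). -/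
open Filter Topology

/-- The i-th block of a vector x ∈ ℝ^{nm}. -/
noncomputable def blk {m n : ℕ} (x : EuclideanSpace ℝ (Fin m × Fin n)) (i : Fin m) :
    EuclideanSpace ℝ (Fin n) :=
  (WithLp.equiv 2 (Fin n → ℝ)).symm fun j => x (i, j)

/-- The cycle consensus penalty. -/
noncomputable def cyclePenalty {m n : ℕ} [NeZero m] (τ : ℝ)
    (x : EuclideanSpace ℝ (Fin m × Fin n)) : ℝ :=
  (2 * τ)⁻¹ * ∑ i : Fin m, ‖blk x i - blk x (i + 1)‖ ^ 2

section aux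
variable {m n : ℕ}

lemma blk_add (x y : EuclideanSpace ℝ (Fin m × Fin n)) (i : Fin m) :
    blk (x + y) i = blk x i + blk y i := rfl

lemma blk_smul (c : ℝ) (x : EuclideanSpace ℝ (Fin m × Fin n)) (i : Fin m) :
    blk (c • x) i = c • blk x i := rfl

noncomputable def blkL (i : Fin m) :
    EuclideanSpace ℝ (Fin m × Fin n) →ₗ[ℝ] EuclideanSpace ℝ (Fin n) where
  toFun x := blk x i
  map_add' _ _ := rfl
  map_smul' _ _ := rfl

lemma blk_continuous (i : Fin m) :
    Continuous fun x : EuclideanSpace ℝ (Fin m × Fin n) => blk x i :=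
  (blkL i).continuous_of_finiteDimensional

lemma blk_norm_le (x : EuclideanSpace ℝ (Fin m × Fin n)) (i : Fin m) : ‖blk x i‖ ≤ ‖x‖ := by
  rw [EuclideanSpace.norm_eq, EuclideanSpace.norm_eq]
  apply Real.sqrt_le_sqrt
  have h : ∀ j : Fin n, ‖blk x i j‖ = ‖x (i, j)‖ := fun j => rfl
  simp_rw [h, Fintype.sum_prod_type]
  exact Finset.single_le_sum (f := fun a => ∑ j, ‖x (a, j)‖ ^ 2)
    (fun a _ => Finset.sum_nonneg fun j _ => by positivity) (Finset.mem_univ i)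

end aux


lemma convexOn_univ_linear_lower {E : Type*} [NormedAddCommGroup E] [NormedSpace ℝ E]
    [FiniteDimensional ℝ E] {f : E → ℝ} (hf : ConvexOn ℝ Set.univ f) :
    ∃ A : ℝ, 0 ≤ A ∧ ∀ x, -(A * (1 + ‖x‖)) ≤ f x := by
  have hcont : Continuous f := continuousOn_univ.mp (hf.continuousOn isOpen_univ)
  set S : Set (E × ℝ) := {p | f p.1 ≤ p.2} with hSdef
  have hSconv : Convex ℝ S := by
    have h := hf.convex_epigraph
    simpa [Set.mem_univ] using h
  have hScl : IsClosed S := isClosed_le (hcont.comp continuous_fst) continuous_snd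
  have hpt : ((0 : E), f 0 - 1) ∉ S := by simp [hSdef]
  obtain ⟨L, u, hLu, hS⟩ := geometric_hahn_banach_point_closed hSconv hScl hpt
  set c : ℝ := L (0, 1) with hcdef
  have hdecomp : ∀ (x : E) (t : ℝ), L (x, t) = L (x, 0) + t * c := by
    intro x t
    have h1 : ((x, t) : E × ℝ) = (x, (0:ℝ)) + t • ((0:E), (1:ℝ)) := by
      simp [Prod.ext_iff]
    rw [h1, map_add, map_smul, smul_eq_mul]
  have hL00 : L ((0:E), (0:ℝ)) = 0 := by
    have : ((0:E), (0:ℝ)) = (0 : E × ℝ) := rfl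
    rw [this, map_zero]
  have hmem : ∀ t : ℝ, f 0 ≤ t → u < t * c := by
    intro t ht
    have := hS ((0:E), t) (by simp [hSdef, ht])
    rwa [hdecomp, hL00, zero_add] at this
  have hLu' : (f 0 - 1) * c < u := by
    have := hLu
    rwa [hdecomp, hL00, zero_add] at this
  have hc : 0 < c := by
    rcases lt_trichotomy c 0 with h | h | h
    · exfalso
      have h1 := hmem (max (f 0) (u / c)) (le_max_left _ _)
      have h2 : u / c ≤ max (f 0) (u / c) := le_max_right _ _
      have h3 : max (f 0) (u / c) * c ≤ u := by
        rw [← div_le_iff_of_neg h]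
        exact h2
      linarith
    · exfalso
      have h1 := hmem (f 0) le_rfl
      rw [h, mul_zero] at h1 hLu'
      linarith
    · exact h
  refine ⟨(|u| + ‖L‖) / c, by positivity, fun x => ?_⟩
  have hmemx : u < L (x, 0) + f x * c := by
    have := hS (x, f x) (by simp [hSdef])
    rwa [hdecomp] at this
  have hLx : L (x, 0) ≤ ‖L‖ * ‖x‖ := by
    have h1 : L (x, 0) ≤ |L (x, 0)| := le_abs_self _
    have h2 : ‖L (x, 0)‖ ≤ ‖L‖ * ‖((x, 0) : E × ℝ)‖ := L.le_opNorm _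
    have h3 : ‖((x, 0) : E × ℝ)‖ = ‖x‖ := by
      rw [Prod.norm_def]
      simp [max_eq_left (norm_nonneg x)]
    rw [h3] at h2
    calc L (x, 0) ≤ |L (x, 0)| := h1
      _ ≤ ‖L‖ * ‖x‖ := h2
  have hkey : u - ‖L‖ * ‖x‖ ≤ f x * c := by linarith
  rw [← mul_le_mul_iff_of_pos_right hc]
  have hAc : (|u| + ‖L‖) / c * c = |u| + ‖L‖ := div_mul_cancel₀ _ hc.ne'
  have hexp : -((|u| + ‖L‖) / c * (1 + ‖x‖)) * c = -((|u| + ‖L‖) * (1 + ‖x‖)) := by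
    field_simp
  rw [hexp]
  have h1 : -|u| ≤ u := neg_abs_le u
  have h2 : (0:ℝ) ≤ ‖L‖ := norm_nonneg _
  have h3 : (0:ℝ) ≤ ‖x‖ := norm_nonneg _
  nlinarith [mul_nonneg h2 h3, mul_nonneg (abs_nonneg u) h3]

set_option maxHeartbeats 1000000 in
/-- Theorem 3.1 (ii): the sequence of solutions of the penalized problems is
bounded and all its limit points solve the sequential problem
min { f(x) : x ∈ argmin_X p }. -/
theorem penalty_method_convergence {m n : ℕ} [NeZero m]
    (hm : 3 ≤ m) (τ : ℝ) (hτ : 0 < τ)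
    (X : Fin m → Set (EuclideanSpace ℝ (Fin n)))
    (hXne : ∀ i, (X i).Nonempty) (hXconv : ∀ i, Convex ℝ (X i))
    (hXcl : ∀ i, IsClosed (X i))
    (f : Fin m → EuclideanSpace ℝ (Fin n) → ℝ)
    (hf : ∀ i, ConvexOn ℝ Set.univ (f i))
    (hcoer : ∀ M : ℝ, ∃ R : ℝ, ∀ x : EuclideanSpace ℝ (Fin m × Fin n),
        (∀ i, blk x i ∈ X i) → R ≤ ‖x‖ → M ≤ ∑ i, f i (blk x i))
    (hXp : ∃ xbar : EuclideanSpace ℝ (Fin m × Fin n), (∀ i, blk xbar i ∈ X i) ∧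
        ∀ y, (∀ i, blk y i ∈ X i) → cyclePenalty τ xbar ≤ cyclePenalty τ y)
    -- the penalty parameter sequence :
    (e : ℕ → Fin m → ℝ) (hepos : ∀ s i, 0 < e s i)
    (hmono : ∀ i, Antitone fun s => e s i)
    (hzero : ∀ i, Tendsto (fun s => e s i) atTop (nhds 0))
    (hratio : ∀ i j, i ≠ j → Tendsto (fun s => e s i / e s j) atTop (nhds 1))
    -- z s solves the s-th penalized problem :
    (z : ℕ → EuclideanSpace ℝ (Fin m × Fin n))
    (hzfeas : ∀ s, ∀ i, blk (z s) i ∈ X i)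
    (hzmin : ∀ s, ∀ y, (∀ i, blk y i ∈ X i) →
        (∑ i, e s i * f i (blk (z s) i)) + cyclePenalty τ (z s) ≤
          (∑ i, e s i * f i (blk y i)) + cyclePenalty τ y) :
    (∃ C : ℝ, ∀ s, ‖z s‖ ≤ C) ∧
      ∀ zbar, MapClusterPt zbar atTop z →
        (∀ i, blk zbar i ∈ X i) ∧
        (∀ y, (∀ i, blk y i ∈ X i) → cyclePenalty τ zbar ≤ cyclePenalty τ y) ∧
        (∀ y, (∀ i, blk y i ∈ X i) →
          (∀ w, (∀ i, blk w i ∈ X i) → cyclePenalty τ y ≤ cyclePenalty τ w) →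
          ∑ i, f i (blk zbar i) ≤ ∑ i, f i (blk y i)) := by
  obtain ⟨xbar, hxbf, hxbmin⟩ := hXp
  have hfc : ∀ i, Continuous (f i) := fun i =>
    continuousOn_univ.mp ((hf i).continuousOn isOpen_univ)
  obtain ⟨A0, hA00, hA0le⟩ : ∃ A : Fin m → ℝ, (∀ i, 0 ≤ A i) ∧
      ∀ (i : Fin m) (x : EuclideanSpace ℝ (Fin n)), -(A i * (1 + ‖x‖)) ≤ f i x := by
    choose A h1 h2 using fun i => convexOn_univ_linear_lower (hf i)
    exact ⟨A, fun i => (h1 i), fun i => (h2 i)⟩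
  set A : ℝ := (∑ i, A0 i) + 1 with hAdef
  have hsumA0 : 0 ≤ ∑ i, A0 i := Finset.sum_nonneg fun i _ => hA00 i
  have hA1 : 1 ≤ A := by rw [hAdef]; linarith
  have hAi : ∀ i, A0 i ≤ A := fun i => by
    have h := Finset.single_le_sum (f := A0) (fun j _ => hA00 j) (Finset.mem_univ i)
    rw [hAdef]; linarith
  have hFlow : ∀ (x : EuclideanSpace ℝ (Fin m × Fin n)) (i : Fin m),
      -(A * (1 + ‖x‖)) ≤ f i (blk x i) := by
    intro x i
    have h1 := hA0le i (blk x i)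
    have h2 := blk_norm_le x i
    have h3 := hAi i
    have h4 : (0:ℝ) ≤ ‖blk x i‖ := norm_nonneg _
    have h5 := hA00 i
    nlinarith
  clear_value A
  have m3 : (3:ℝ) ≤ (m:ℝ) := by exact_mod_cast hm
  obtain ⟨R, hR⟩ := hcoer ((∑ i, f i (blk xbar i)) + 1)
  set ρ : ℝ := max R 1 + ‖xbar‖ + 1 with hρdef
  have hρ1 : 1 ≤ ρ := by
    have h1 := le_max_right R 1
    have h2 := norm_nonneg xbar
    rw [hρdef]; linarith
  have hρ0 : 0 < ρ := lt_of_lt_of_le one_pos hρ1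
  clear_value ρ
  have hgrow : ∀ x, (∀ i, blk x i ∈ X i) → ρ ≤ ‖x - xbar‖ →
      (∑ i, f i (blk xbar i)) + ‖x - xbar‖ / ρ ≤ ∑ i, f i (blk x i) := by
    intro x hxf hd
    have hnp : 0 < ‖x - xbar‖ := lt_of_lt_of_le hρ0 hd
    set t : ℝ := ρ / ‖x - xbar‖ with htdef
    have ht0 : 0 < t := div_pos hρ0 hnp
    have ht1 : t ≤ 1 := (div_le_one hnp).2 hd
    have hblky : ∀ i, blk ((1-t) • xbar + t • x) i = (1-t) • blk xbar i + t • blk x i :=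
      fun i => rfl
    have hyfeas : ∀ i, blk ((1-t) • xbar + t • x) i ∈ X i := by
      intro i; rw [hblky i]
      exact hXconv i (hxbf i) (hxf i) (by linarith) ht0.le (by ring)
    have hynorm : R ≤ ‖(1-t) • xbar + t • x‖ := by
      have he : (1-t) • xbar + t • x - xbar = t • (x - xbar) := by
        rw [smul_sub, sub_smul, one_smul]; abel
      have h1 : ‖t • (x - xbar)‖ = ρ := by
        rw [norm_smul, Real.norm_eq_abs, abs_of_pos ht0, htdef, div_mul_cancel₀ _ hnp.ne']
      have h2 : ‖(1-t) • xbar + t • x - xbar‖ ≤ ‖(1-t) • xbar + t • x‖ + ‖xbar‖ :=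
        norm_sub_le _ _
      rw [he, h1] at h2
      have h3 := le_max_left R 1
      rw [hρdef] at h2
      linarith
    have hcoery := hR _ hyfeas hynorm
    have hconv : ∑ i, f i (blk ((1-t) • xbar + t • x) i)
        ≤ (1-t) * ∑ i, f i (blk xbar i) + t * ∑ i, f i (blk x i) := by
      rw [Finset.mul_sum, Finset.mul_sum, ← Finset.sum_add_distrib]
      refine Finset.sum_le_sum fun i _ => ?_
      rw [hblky i]
      exact (hf i).2 (Set.mem_univ _) (Set.mem_univ _) (by linarith) ht0.le (by ring)
    have h3 : 1 ≤ t * ((∑ i, f i (blk x i)) - ∑ i, f i (blk xbar i)) := by nlinarith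
    have h4 : ‖x - xbar‖ / ρ = 1 / t := by rw [htdef, one_div_div]
    rw [h4]
    have h5 : 1 / t ≤ (∑ i, f i (blk x i)) - ∑ i, f i (blk xbar i) := by
      rw [div_le_iff₀ ht0]
      nlinarith
    linarith
  have hkey : ∀ s (y' : EuclideanSpace ℝ (Fin m × Fin n)), (∀ i, blk y' i ∈ X i) →
      cyclePenalty τ y' ≤ cyclePenalty τ (z s) →
      ∑ i, (e s i / e s 0) * f i (blk (z s) i) ≤ ∑ i, (e s i / e s 0) * f i (blk y' i) := by
    intro s y' hy'f hy'p
    have h1 := hzmin s y' hy'f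
    have h2 : ∑ i, e s i * f i (blk (z s) i) ≤ ∑ i, e s i * f i (blk y' i) := by linarith
    have h0 : 0 < e s 0 := hepos s 0
    have h3 : (∑ i, e s i * f i (blk (z s) i)) / e s 0
        ≤ (∑ i, e s i * f i (blk y' i)) / e s 0 := by gcongr
    calc ∑ i, (e s i / e s 0) * f i (blk (z s) i)
        = (∑ i, e s i * f i (blk (z s) i)) / e s 0 := by
          rw [Finset.sum_div]
          exact Finset.sum_congr rfl fun i _ => (mul_div_right_comm _ _ _).symm
      _ ≤ (∑ i, e s i * f i (blk y' i)) / e s 0 := h3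
      _ = ∑ i, (e s i / e s 0) * f i (blk y' i) := by
          rw [Finset.sum_div]
          exact Finset.sum_congr rfl fun i _ => mul_div_right_comm _ _ _
  have hrat : ∀ i, Tendsto (fun s => e s i / e s 0) atTop (𝓝 1) := by
    intro i
    by_cases hi : i = 0
    · subst hi
      exact tendsto_const_nhds.congr fun s => (div_self (hepos s 0).ne').symm
    · exact hratio i 0 hi
  constructor
  · -- boundedness
    set C0 : ℝ := |∑ i, f i (blk xbar i)| + 1 with hC0def
    set δ : ℝ := min (1/2) (1/(8 * m * A * ρ)) with hδdef
    have hm0 : (0:ℝ) < (m:ℝ) := by linarith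
    have h8 : (0:ℝ) < 8 * (m:ℝ) * A * ρ := by
      have : (0:ℝ) < A := by linarith
      positivity
    have hδ0 : 0 < δ := lt_min (by norm_num) (by positivity)
    have hδhalf : δ ≤ 1/2 := min_le_left _ _
    have hδ8 : δ * (8 * m * A * ρ) ≤ 1 := by
      have h := min_le_right (1/2) (1/(8*(m:ℝ)*A*ρ))
      calc δ * (8*(m:ℝ)*A*ρ) ≤ (1/(8*(m:ℝ)*A*ρ)) * (8*(m:ℝ)*A*ρ) :=
            mul_le_mul_of_nonneg_right (by rw [hδdef]; exact h) h8.le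
        _ = 1 := by field_simp
    clear_value δ
    have hev : ∀ᶠ s in atTop, (∀ i, |e s i / e s 0 - 1| ≤ δ) ∧
        (∑ i, (e s i / e s 0) * f i (blk xbar i) ≤ C0) := by
      apply Filter.Eventually.and
      · rw [eventually_all]
        intro i
        have h2 := Metric.tendsto_nhds.mp (hrat i) δ hδ0
        filter_upwards [h2] with s hs
        rw [Real.dist_eq] at hs; exact hs.le
      · have hT : Tendsto (fun s => ∑ i, (e s i / e s 0) * f i (blk xbar i)) atTop
            (𝓝 (∑ i, 1 * f i (blk xbar i))) :=
          tendsto_finset_sum _ fun i _ => (hrat i).mul_const _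
        have hlt : (∑ i, 1 * f i (blk xbar i)) < C0 := by
          have h := le_abs_self (∑ i, f i (blk xbar i))
          simp only [one_mul]
          rw [hC0def]; linarith
        exact (hT.eventually_lt_const hlt).mono fun s hs => hs.le
    clear_value C0
    obtain ⟨N, hN⟩ := eventually_atTop.mp hev
    set C1 : ℝ := max (ρ + ‖xbar‖)
        (4 * ρ * (C0 + |∑ i, f i (blk xbar i)|) + 4 + 2 * ‖xbar‖) with hC1def
    have hC1nn : 0 ≤ C1 :=
      le_trans (add_nonneg hρ0.le (norm_nonneg _)) (le_max_left _ _)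
    have hsumnn : 0 ≤ ∑ t ∈ Finset.range N, ‖z t‖ :=
      Finset.sum_nonneg fun t _ => norm_nonneg _
    refine ⟨C1 + ∑ t ∈ Finset.range N, ‖z t‖, fun s => ?_⟩
    rcases lt_or_ge s N with hsN | hsN
    · have h1 : ‖z s‖ ≤ ∑ t ∈ Finset.range N, ‖z t‖ :=
        Finset.single_le_sum (fun t _ => norm_nonneg _) (Finset.mem_range.2 hsN)
      linarith
    · obtain ⟨ha, hb⟩ := hN s hsN
      have hbound : ‖z s‖ ≤ C1 := by
        rcases le_or_gt ‖z s - xbar‖ ρ with hcase | hcase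
        · have h1 : ‖z s‖ - ‖xbar‖ ≤ ‖z s - xbar‖ := norm_sub_norm_le _ _
          exact le_trans (by linarith) (le_max_left _ _)
        · have hd := hcase.le
          have hgr := hgrow (z s) (hzfeas s) hd
          have hstep3 : ∀ i ∈ Finset.univ,
              f i (blk (z s) i) - δ * (f i (blk (z s) i) + 2 * (A * (1 + ‖z s‖)))
                ≤ (e s i / e s 0) * f i (blk (z s) i) := by
            intro i _
            have hr := abs_le.mp (ha i)
            have hv := hFlow (z s) i
            have hW : (0:ℝ) ≤ A * (1 + ‖z s‖) := by nlinarith [norm_nonneg (z s)]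
            rcases le_or_gt 0 (f i (blk (z s) i)) with hv0 | hv0
            · nlinarith [mul_nonneg (by linarith : (0:ℝ) ≤ e s i / e s 0 - 1 + δ) hv0,
                mul_nonneg hδ0.le hW]
            · nlinarith [mul_nonneg (by linarith : (0:ℝ) ≤ δ - (e s i / e s 0 - 1))
                  (by linarith : (0:ℝ) ≤ -(f i (blk (z s) i))),
                mul_nonneg hδ0.le (by linarith : (0:ℝ) ≤ f i (blk (z s) i) + A * (1 + ‖z s‖))]
          have hsum3 := Finset.sum_le_sum hstep3
          have hkey2 := hkey s xbar hxbf (hxbmin (z s) (hzfeas s))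
          have hsumeq : ∑ i : Fin m,
              (f i (blk (z s) i) - δ * (f i (blk (z s) i) + 2 * (A * (1 + ‖z s‖))))
              = (1 - δ) * (∑ i, f i (blk (z s) i)) - 2 * m * δ * (A * (1 + ‖z s‖)) := by
            rw [Finset.sum_sub_distrib, ← Finset.mul_sum, Finset.sum_add_distrib,
              Finset.sum_const, Finset.card_univ, Fintype.card_fin, nsmul_eq_mul]
            ring
          rw [hsumeq] at hsum3
          have hmain : (1 - δ) * (∑ i, f i (blk (z s) i))
              ≤ C0 + 2 * m * δ * (A * (1 + ‖z s‖)) := by linarith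
          have h1δ : (0:ℝ) ≤ 1 - δ := by linarith
          have hgr2 : (1 - δ) * ((∑ i, f i (blk xbar i)) + ‖z s - xbar‖ / ρ)
              ≤ C0 + 2 * m * δ * (A * (1 + ‖z s‖)) :=
            le_trans (mul_le_mul_of_nonneg_left hgr h1δ) hmain
          have hmul : (1 - δ) * ((∑ i, f i (blk xbar i)) + ‖z s - xbar‖ / ρ) * ρ
              ≤ (C0 + 2 * m * δ * (A * (1 + ‖z s‖))) * ρ :=
            mul_le_mul_of_nonneg_right hgr2 hρ0.le
          have hexpand : (1 - δ) * ((∑ i, f i (blk xbar i)) + ‖z s - xbar‖ / ρ) * ρ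
              = (1 - δ) * ((∑ i, f i (blk xbar i)) * ρ) + (1 - δ) * ‖z s - xbar‖ := by
            field_simp
          rw [hexpand] at hmul
          have E3 : δ * (8 * (m:ℝ) * A * ρ) * ‖z s‖ ≤ 1 * ‖z s‖ :=
            mul_le_mul_of_nonneg_right hδ8 (norm_nonneg _)
          have E4 : -(|∑ i, f i (blk xbar i)| * ρ)
              ≤ (1 - δ) * ((∑ i, f i (blk xbar i)) * ρ) := by
            rcases le_or_gt 0 (∑ i, f i (blk xbar i)) with h | h
            · have := abs_of_nonneg h
              nlinarith [mul_nonneg h hρ0.le]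
            · have := abs_of_neg h
              nlinarith [mul_nonneg (le_of_lt (neg_pos.2 h)) hρ0.le]
          have E5 : ‖z s - xbar‖ * (1/2) ≤ (1 - δ) * ‖z s - xbar‖ := by
            nlinarith [norm_nonneg (z s - xbar)]
          have E6 : ‖z s‖ ≤ ‖z s - xbar‖ + ‖xbar‖ := by
            have h := norm_sub_norm_le (z s) xbar
            linarith
          refine le_trans ?_ (le_max_right _ _)
          nlinarith [hmul, E3, E4, E5, E6, hδ8, norm_nonneg (z s)]
      linarith
  · -- limit points
    intro zbar hcl
    have hGne : (atTop ⊓ comap z (𝓝 zbar)).NeBot := by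
      have h1 : NeBot (map z (atTop ⊓ comap z (𝓝 zbar))) := by
        rw [Filter.push_pull, inf_comm]
        exact hcl
      exact (Filter.map_neBot_iff z).mp h1
    set G := atTop ⊓ comap z (𝓝 zbar) with hGdef
    haveI := hGne
    have hGle : G ≤ atTop := inf_le_left
    have hGz : Tendsto z G (𝓝 zbar) := tendsto_comap.mono_left inf_le_right
    have hGblk : ∀ i, Tendsto (fun s => blk (z s) i) G (𝓝 (blk zbar i)) := fun i =>
      ((blk_continuous i).tendsto zbar).comp hGz
    have hGf : ∀ i, Tendsto (fun s => f i (blk (z s) i)) G (𝓝 (f i (blk zbar i))) := fun i =>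
      ((hfc i).tendsto _).comp (hGblk i)
    have hfeas : ∀ i, blk zbar i ∈ X i := fun i =>
      (hXcl i).mem_of_tendsto (hGblk i) (Eventually.of_forall fun s => hzfeas s i)
    have hPc : Continuous fun x : EuclideanSpace ℝ (Fin m × Fin n) => cyclePenalty τ x := by
      unfold cyclePenalty
      exact continuous_const.mul (continuous_finset_sum _ fun i _ =>
        ((blk_continuous i).sub (blk_continuous (i+1))).norm.pow 2)
    refine ⟨hfeas, ?_, ?_⟩
    · have hPle : cyclePenalty τ zbar ≤ cyclePenalty τ xbar := by
        have hT1 : Tendsto (fun s => cyclePenalty τ (z s)) G (𝓝 (cyclePenalty τ zbar)) :=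
          (hPc.tendsto zbar).comp hGz
        have hsum0 : Tendsto (fun s => ∑ i, e s i * (f i (blk xbar i) - f i (blk (z s) i)))
            G (𝓝 0) := by
          have h := tendsto_finset_sum (Finset.univ : Finset (Fin m)) (fun i
              (_ : i ∈ Finset.univ) =>
            (((hzero i).mono_left hGle).mul (tendsto_const_nhds.sub (hGf i)) :
              Tendsto (fun s => e s i * (f i (blk xbar i) - f i (blk (z s) i))) G
                (𝓝 (0 * (f i (blk xbar i) - f i (blk zbar i))))))
          simpa using h
        have hT2 : Tendsto (fun s => cyclePenalty τ xbar
            + ∑ i, e s i * (f i (blk xbar i) - f i (blk (z s) i))) G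
            (𝓝 (cyclePenalty τ xbar + 0)) := tendsto_const_nhds.add hsum0
        rw [add_zero] at hT2
        apply le_of_tendsto_of_tendsto' hT1 hT2
        intro s
        have h1 := hzmin s xbar hxbf
        have h2 : ∑ i, e s i * (f i (blk xbar i) - f i (blk (z s) i))
            = (∑ i, e s i * f i (blk xbar i)) - ∑ i, e s i * f i (blk (z s) i) := by
          simp [mul_sub, Finset.sum_sub_distrib]
        linarith
      exact fun y hy => le_trans hPle (hxbmin y hy)
    · intro y hyf hymin
      have hT1 : Tendsto (fun s => ∑ i, (e s i / e s 0) * f i (blk (z s) i)) G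
          (𝓝 (∑ i, 1 * f i (blk zbar i))) :=
        tendsto_finset_sum _ fun i _ => ((hrat i).mono_left hGle).mul (hGf i)
      have hT2 : Tendsto (fun s => ∑ i, (e s i / e s 0) * f i (blk y i)) G
          (𝓝 (∑ i, 1 * f i (blk y i))) :=
        tendsto_finset_sum _ fun i _ => ((hrat i).mono_left hGle).mul_const _
      have hle := le_of_tendsto_of_tendsto' hT1 hT2
        (fun s => hkey s y hyf (hymin (z s) (hzfeas s)))
      simpa using hle
end
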